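/- (Chvátal–Thomassen, upper bound) For every positive integer d, every 2-edge connected graph of diameter d admits a strong orientation whose diameter is at most 2d² + 2d. -/

import Mathlib

/-- There is a directed walk of length at most `n` from `u` to `v` along the relation `D`. -/
def DiPathLE {V : Type*} (D : V → V → Prop) (u v : V) (n : ℕ) : Prop :=
  ∃ m ≤ n, ∃ f : ℕ → V, f 0 = u ∧ f m = v ∧ ∀ i < m, D (f i) (f (i + 1))

/-- `O` is an orientation of `G`: every arc of `O` is an edge of `G`, and every edge of `G`
gets exactly one of the two possible directions. -/
def IsOrientation {V : Type*} (G : SimpleGraph V) (O : V → V → Prop) : Prop :=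
  (∀ u v, O u v → G.Adj u v) ∧ ∀ u v, G.Adj u v → (O u v ↔ ¬ O v u)

/-- `G` is 2-edge connected: connected and without bridges. -/
def TwoEdgeConnected {V : Type*} (G : SimpleGraph V) : Prop :=
  G.Connected ∧ ∀ e, ¬ G.IsBridge e

/-- `G` has diameter exactly `d`. -/
def HasDiam {V : Type*} (G : SimpleGraph V) (d : ℕ) : Prop :=
  G.Connected ∧ (∀ u v, G.dist u v ≤ d) ∧ ∃ u v, G.dist u v = d

/-- `B` is a `k`-step dominating set of `G`. -/
def KStepDom {V : Type*} (G : SimpleGraph V) (B : Set V) (k : ℕ) : Prop :=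
  ∀ v, ∃ u ∈ B, ∃ w : G.Walk v u, w.length ≤ k

/-- `D` is an oriented subgraph of `G` with vertex set `S`: every arc of `D` is an
orientation of an edge of `G` with both endpoints in `S`, and no edge receives
both directions. -/
def IsOrientedSubgraph {V : Type*} (G : SimpleGraph V) (S : Set V) (D : V → V → Prop) : Prop :=
  (∀ u v, D u v → G.Adj u v ∧ u ∈ S ∧ v ∈ S) ∧ ∀ u v, ¬ (D u v ∧ D v u)

/-- The setoid identifying all the vertices of `B`. -/
def contractSetoid {V : Type*} (B : Set V) : Setoid V where
  r x y := x = y ∨ (x ∈ B ∧ y ∈ B)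
  iseqv := by
    refine ⟨fun _ => Or.inl rfl, ?_, ?_⟩
    · rintro x y (rfl | h)
      · exact Or.inl rfl
      · exact Or.inr ⟨h.2, h.1⟩
    · rintro x y z (rfl | h1) (rfl | h2)
      · exact Or.inl rfl
      · exact Or.inr h2
      · exact Or.inr h1
      · exact Or.inr ⟨h1.1, h2.2⟩

/-- The graph `G/B` obtained from `G` by contracting the set `B` to a single vertex
(removing resulting loops). -/
def contractGraph {V : Type*} (G : SimpleGraph V) (B : Set V) :
    SimpleGraph (Quotient (contractSetoid B)) where
  Adj a b := a ≠ b ∧ ∃ x y, Quotient.mk (contractSetoid B) x = a ∧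
    Quotient.mk (contractSetoid B) y = b ∧ G.Adj x y
  symm := by
    refine ⟨?_⟩
    rintro a b ⟨hne, x, y, hx, hy, hadj⟩
    exact ⟨hne.symm, y, x, hy, hx, hadj.symm⟩
  loopless := by
    refine ⟨?_⟩
    rintro a ⟨hne, -⟩
    exact hne rfl

/-- `k` is the length of a shortest cycle of `G` containing the edge `pq`. -/
def ShortestCycleThroughEdge {V : Type*} (G : SimpleGraph V) (p q : V) (k : ℕ) : Prop :=
  (∃ (a : V) (c : G.Walk a a), c.IsCycle ∧ s(p, q) ∈ c.edges ∧ c.length = k) ∧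
  ∀ (a : V) (c : G.Walk a a), c.IsCycle → s(p, q) ∈ c.edges → k ≤ c.length

/-- `G` has radius exactly `r`. -/
def HasRadius {V : Type*} (G : SimpleGraph V) (r : ℕ) : Prop :=
  G.Connected ∧ (∃ v, ∀ u, G.dist v u ≤ r) ∧ ∀ v, ∃ u, r ≤ G.dist v u

/-!
Fix a vertex `v₀`; the set `{v₀}` is `d`-step dominating. For `K = d, d - 1, …, 1`, a
`K`-step dominating set `B` carrying a partial orientation is enlarged, one ear at a time, to a
`(K - 1)`-step dominating set, each ear being oriented so that its vertices reach `B` and are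
reached from `B` within `2K` steps. An ear starts at some `x ∈ B` with a neighbour `u` not yet
covered and follows a shortest walk from `u` to `B` avoiding the edge `ux` (which is not a
bridge) until it meets the covered set at some `w`; it is oriented towards `B` or away from `B`
according to the direction in which `w` is already close to `B`. Summing over the phases,
every vertex reaches `v₀` and is reached from `v₀` within `2d + 2(d - 1) + ⋯ + 2 = d(d + 1)`
steps.
-/

open SimpleGraph

section Walks

variable {V : Type*} {P Q D D' : V → V → Prop} {a b c : V} {m n : ℕ}

def RelWalk (P : V → V → Prop) (a b : V) (n : ℕ) : Prop :=
  ∃ f : ℕ → V, f 0 = a ∧ f n = b ∧ ∀ i < n, P (f i) (f (i + 1))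

theorem relWalk_segment {f : ℕ → V} (hf : ∀ i < n, P (f i) (f (i + 1))) {i j : ℕ}
    (hij : i ≤ j) (hjn : j ≤ n) : RelWalk P (f i) (f j) (j - i) :=
  ⟨fun t => f (i + t), by simp, by simp only [Nat.add_sub_cancel' hij],
    fun t ht => by simpa only [← Nat.add_assoc] using hf (i + t) (by omega)⟩

theorem RelWalk.refl (P : V → V → Prop) (a : V) : RelWalk P a a 0 :=
  ⟨fun _ => a, rfl, rfl, fun _ h => absurd h (Nat.not_lt_zero _)⟩

theorem RelWalk.mono (hPQ : P ≤ Q) : RelWalk P a b n → RelWalk Q a b n :=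
  fun ⟨f, h0, hn, hf⟩ => ⟨f, h0, hn, fun i hi => hPQ _ _ (hf i hi)⟩

theorem RelWalk.append (h₁ : RelWalk P a b n) (h₂ : RelWalk P b c m) :
    RelWalk P a c (n + m) := by
  obtain ⟨f, hf0, hfn, hf⟩ := h₁
  obtain ⟨g, hg0, hgm, hg⟩ := h₂
  refine ⟨fun i => if i ≤ n then f i else g (i - n), by simp [hf0], ?_, fun i hi => ?_⟩
  · rcases m.eq_zero_or_pos with rfl | hm
    · simp [hfn, ← hg0, hgm]
    · simp [show ¬ n + m ≤ n by omega, hgm]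
  · rcases lt_trichotomy i n with hin | rfl | hin
    · simpa [hin.le, show i + 1 ≤ n by omega] using hf i hin
    · simpa [hfn, ← hg0] using hg 0 (by omega)
    · simpa [show ¬ i + 1 ≤ n by omega, show ¬ i ≤ n by omega,
        show i + 1 - n = i - n + 1 by omega] using hg (i - n) (by omega)

theorem RelWalk.flip : RelWalk P a b n → RelWalk (flip P) b a n :=
  fun ⟨f, h0, hn, hf⟩ => ⟨fun i => f (n - i), by simp [hn], by simp [h0], fun i hi => by
    have := hf (n - (i + 1)) (by omega)
    rwa [show n - (i + 1) + 1 = n - i by omega] at this⟩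

theorem SimpleGraph.Walk.relWalk {G : SimpleGraph V} (w : G.Walk a b) :
    RelWalk G.Adj a b w.length :=
  ⟨w.getVert, w.getVert_zero, w.getVert_length, fun _ hi => w.adj_getVert_succ hi⟩

theorem RelWalk.exists_first_not (h : RelWalk P a b n) :
    RelWalk Q a b n ∨ ∃ t < n, ∃ c c', RelWalk Q a c t ∧ P c c' ∧ ¬ Q c c' := by
  classical
  obtain ⟨f, hf0, hfn, hf⟩ := h
  by_cases hall : ∀ i < n, Q (f i) (f (i + 1))
  · exact Or.inl ⟨f, hf0, hfn, hall⟩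
  push Not at hall
  obtain ⟨t, ⟨ht, hnot⟩, hmin⟩ : ∃ t, (t < n ∧ ¬ Q (f t) (f (t + 1))) ∧
      ∀ s < t, ¬ (s < n ∧ ¬ Q (f s) (f (s + 1))) :=
    ⟨_, Nat.find_spec hall, fun _ => Nat.find_min hall⟩
  refine Or.inr ⟨t, ht, _, _, ?_, hf t ht, hnot⟩
  rw [← hf0]
  simpa using relWalk_segment (fun i hi => not_not.1 fun h => hmin _ hi ⟨by omega, h⟩)
    (Nat.zero_le _) le_rfl

theorem diPathLE_iff : DiPathLE D a b n ↔ ∃ m ≤ n, RelWalk D a b m := Iff.rfl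

theorem RelWalk.diPathLE (h : RelWalk D a b m) (hmn : m ≤ n) : DiPathLE D a b n :=
  diPathLE_iff.2 ⟨m, hmn, h⟩

theorem DiPathLE.refl (D : V → V → Prop) (a : V) (n : ℕ) : DiPathLE D a a n :=
  (RelWalk.refl D a).diPathLE (Nat.zero_le n)

theorem DiPathLE.mono (hD : D ≤ D') (hn : n ≤ m) (h : DiPathLE D a b n) :
    DiPathLE D' a b m := by
  obtain ⟨k, hk, hw⟩ := diPathLE_iff.1 h
  exact (hw.mono hD).diPathLE (hk.trans hn)

theorem DiPathLE.trans (h₁ : DiPathLE D a b n) (h₂ : DiPathLE D b c m) :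
    DiPathLE D a c (n + m) := by
  obtain ⟨k₁, hk₁, hw₁⟩ := diPathLE_iff.1 h₁
  obtain ⟨k₂, hk₂, hw₂⟩ := diPathLE_iff.1 h₂
  exact (hw₁.append hw₂).diPathLE (Nat.add_le_add hk₁ hk₂)

theorem diPathLE_flip_iff : DiPathLE (flip D) a b n ↔ DiPathLE D b a n :=
  ⟨fun ⟨k, hk, hw⟩ => ⟨k, hk, RelWalk.flip hw⟩, fun ⟨k, hk, hw⟩ => ⟨k, hk, RelWalk.flip hw⟩⟩

theorem diPathLE_segment {f : ℕ → V} (hf : ∀ i < n, D (f i) (f (i + 1))) {i j : ℕ}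
    (hij : i ≤ j) (hjn : j ≤ n) : DiPathLE D (f i) (f j) (j - i) :=
  (relWalk_segment hf hij hjn).diPathLE le_rfl

end Walks

section ShortestWalk

variable {V : Type*} {P : V → V → Prop} {T : Set V} {f : ℕ → V} {a b : V} {m n : ℕ}

structure IsShortestWalkTo (P : V → V → Prop) (T : Set V) (f : ℕ → V) (n : ℕ) : Prop where
  step : ∀ i < n, P (f i) (f (i + 1))
  mem : f n ∈ T
  le : ∀ m, ∀ b ∈ T, RelWalk P (f 0) b m → n ≤ m

theorem exists_isShortestWalkTo (h : RelWalk P a b m) (hb : b ∈ T) :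
    ∃ f n, f 0 = a ∧ IsShortestWalkTo P T f n := by
  classical
  have hex : ∃ n, ∃ b ∈ T, RelWalk P a b n := ⟨m, b, hb, h⟩
  obtain ⟨b', hb', f, hf0, hfn, hf⟩ := Nat.find_spec hex
  refine ⟨f, _, hf0, hf, hfn ▸ hb', fun k c hc hw => Nat.find_min' hex ⟨c, hc, hf0 ▸ hw⟩⟩

theorem IsShortestWalkTo.relWalk (h : IsShortestWalkTo P T f n) {i j : ℕ} (hij : i ≤ j)
    (hjn : j ≤ n) : RelWalk P (f i) (f j) (j - i) :=
  relWalk_segment h.step hij hjn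

theorem IsShortestWalkTo.injOn (h : IsShortestWalkTo P T f n) : Set.InjOn f (Set.Iic n) := by
  suffices ∀ i ≤ n, ∀ j ≤ n, i < j → f i ≠ f j by
    intro i hi j hj hij
    by_contra hne
    rcases Nat.lt_or_gt_of_ne hne with hlt | hlt
    exacts [this i hi j hj hlt hij, this j hj i hi hlt hij.symm]
  intro i hi j hj hij heq
  have hshort := (h.relWalk (Nat.zero_le i) hi).append (heq ▸ h.relWalk hj le_rfl)
  have := h.le _ _ h.mem hshort
  omega

end ShortestWalk

section Orientation

variable {V : Type*} {G : SimpleGraph V} {S : Set V} {D : V → V → Prop}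

theorem IsOrientedSubgraph.flip (h : IsOrientedSubgraph G S D) :
    IsOrientedSubgraph G S (flip D) :=
  ⟨fun u v huv => ⟨(h.1 v u huv).1.symm, (h.1 v u huv).2.2, (h.1 v u huv).2.1⟩,
    fun u v huv => h.2 v u huv⟩

theorem IsOrientedSubgraph.exists_isOrientation_le (h : IsOrientedSubgraph G S D) :
    ∃ O, IsOrientation G O ∧ D ≤ O := by
  let r : V → V → Prop := WellOrderingRel
  refine ⟨fun a b => D a b ∨ (G.Adj a b ∧ ¬ D b a ∧ r a b), ⟨?_, fun u v huv => ?_⟩,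
    fun a b hab => Or.inl hab⟩
  · rintro u v (huv | ⟨huv, -⟩)
    exacts [(h.1 u v huv).1, huv]
  have hD := h.2 u v
  have hr : ¬ (r u v ∧ r v u) := fun h => asymm_of r h.1 h.2
  have hr' : r u v ∨ r v u := by
    rcases trichotomous_of r u v with h | h | h
    exacts [Or.inl h, absurd h huv.ne, Or.inr h]
  tauto

end Orientation

section Ear

variable {V : Type*} {G : SimpleGraph V} {S : Set V} {D : V → V → Prop} {e : ℕ → V} {L : ℕ}

structure IsEar (G : SimpleGraph V) (S : Set V) (e : ℕ → V) (L : ℕ) : Prop where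
  two_le : 2 ≤ L
  adj : ∀ t < L, G.Adj (e t) (e (t + 1))
  start_mem : e 0 ∈ S
  end_mem : e L ∈ S
  notMem : ∀ k, 0 < k → k < L → e k ∉ S
  injOn : Set.InjOn e (Set.Ioo 0 L)
  /-- Excludes the ear `x, y, x` of length two, which would use one edge in both directions. -/
  start_ne : e 0 ≠ e 2

def earArcs (e : ℕ → V) (L : ℕ) (a c : V) : Prop :=
  ∃ t < L, a = e t ∧ c = e (t + 1)

namespace IsEar

theorem mem_union (h : IsEar G S e L) {k : ℕ} (hk : k ≤ L) : e k ∈ S ∪ e '' Set.Ioo 0 L := by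
  rcases Nat.eq_zero_or_pos k with rfl | hk0
  · exact Or.inl h.start_mem
  rcases hk.lt_or_eq with hkL | rfl
  exacts [Or.inr ⟨k, ⟨hk0, hkL⟩, rfl⟩, Or.inl h.end_mem]

theorem ssubset (h : IsEar G S e L) : S ⊂ S ∪ e '' Set.Ioo 0 L :=
  Set.ssubset_iff_of_subset Set.subset_union_left |>.2
    ⟨e 1, Or.inr ⟨1, ⟨one_pos, h.two_le⟩, rfl⟩, h.notMem 1 one_pos h.two_le⟩

theorem eq_of_apply_eq (h : IsEar G S e L) {i j : ℕ} (hi : 0 < i) (hiL : i < L) (hj : j ≤ L)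
    (hij : e i = e j) : i = j := by
  have hj0 : 0 < j := Nat.pos_of_ne_zero fun hj0 =>
    h.notMem i hi hiL (hij ▸ hj0 ▸ h.start_mem)
  have hjL : j < L := hj.lt_of_ne fun hjL => h.notMem i hi hiL (hij ▸ hjL ▸ h.end_mem)
  exact h.injOn ⟨hi, hiL⟩ ⟨hj0, hjL⟩ hij

theorem notMem_or_notMem (h : IsEar G S e L) {t : ℕ} (ht : t < L) : e t ∉ S ∨ e (t + 1) ∉ S := by
  rcases Nat.eq_zero_or_pos t with rfl | ht0
  exacts [Or.inr (h.notMem 1 one_pos h.two_le), Or.inl (h.notMem t ht0 ht)]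

theorem isOrientedSubgraph_sup (h : IsEar G S e L) (hD : IsOrientedSubgraph G S D) :
    IsOrientedSubgraph G (S ∪ e '' Set.Ioo 0 L) (D ⊔ earArcs e L) := by
  have hDS {a c} (hac : D a c) : a ∈ S ∧ c ∈ S := (hD.1 a c hac).2
  refine ⟨?_, ?_⟩
  · rintro a c (hac | ⟨t, ht, rfl, rfl⟩)
    · exact ⟨(hD.1 a c hac).1, Or.inl (hDS hac).1, Or.inl (hDS hac).2⟩
    · exact ⟨h.adj t ht, h.mem_union ht.le, h.mem_union ht⟩
  rintro a c ⟨hac | ⟨t, ht, rfl, rfl⟩, hca | ⟨t', ht', hc, ha⟩⟩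
  · exact hD.2 a c ⟨hac, hca⟩
  · subst hc ha
    exact (h.notMem_or_notMem ht').elim (· (hDS hac).2) (· (hDS hac).1)
  · exact (h.notMem_or_notMem ht).elim (· (hDS hca).2) (· (hDS hca).1)
  rcases Nat.eq_zero_or_pos t with rfl | ht0
  · have ht'1 := h.eq_of_apply_eq one_pos h.two_le ht'.le hc
    subst ht'1
    exact h.start_ne ha
  · have htt' := h.eq_of_apply_eq ht0 ht (by omega) ha
    rcases Nat.eq_zero_or_pos t' with rfl | ht'0
    · obtain rfl : t = 1 := htt'
      exact h.start_ne hc.symm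
    · have := h.eq_of_apply_eq ht'0 ht' (by omega) hc.symm
      omega

end IsEar

end Ear

section Phase

variable {V : Type*} {G : SimpleGraph V} {B S : Set V} {K : ℕ} {D : V → V → Prop}

/-- The invariant of the phase in which `S` grows by ears from a `K`-step dominating set `B`.
The field `near_base` is what lets each new ear be oriented either towards `B` or away from it. -/
structure PhaseInvariant (G : SimpleGraph V) (B : Set V) (K : ℕ) (S : Set V)
    (D : V → V → Prop) : Prop where
  oriented : IsOrientedSubgraph G S D
  subset : B ⊆ S
  to_base : ∀ x ∈ S, ∃ b ∈ B, DiPathLE D x b (2 * K)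
  from_base : ∀ x ∈ S, ∃ b ∈ B, DiPathLE D b x (2 * K)
  near_base : ∀ x ∈ S, ∀ n, ∀ b ∈ B, RelWalk G.Adj x b n →
    (∃ b ∈ B, DiPathLE D x b n) ∨ (∃ b ∈ B, DiPathLE D b x n)

namespace PhaseInvariant

theorem base (hD : IsOrientedSubgraph G B D) : PhaseInvariant G B K B D where
  oriented := hD
  subset := subset_rfl
  to_base x hx := ⟨x, hx, .refl D x _⟩
  from_base x hx := ⟨x, hx, .refl D x _⟩
  near_base x hx _ _ _ _ := Or.inl ⟨x, hx, .refl D x _⟩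

theorem flip (h : PhaseInvariant G B K S D) : PhaseInvariant G B K S (flip D) where
  oriented := h.oriented.flip
  subset := h.subset
  to_base x hx :=
    let ⟨b, hb, hp⟩ := h.from_base x hx
    ⟨b, hb, diPathLE_flip_iff.2 hp⟩
  from_base x hx :=
    let ⟨b, hb, hp⟩ := h.to_base x hx
    ⟨b, hb, diPathLE_flip_iff.2 hp⟩
  near_base x hx n b hb hw :=
    (h.near_base x hx n b hb hw).symm.imp
      (fun ⟨b, hb, hp⟩ => ⟨b, hb, diPathLE_flip_iff.2 hp⟩)
      (fun ⟨b, hb, hp⟩ => ⟨b, hb, diPathLE_flip_iff.2 hp⟩)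

theorem sup_earArcs (h : PhaseInvariant G B K S D) {e : ℕ → V} {L r : ℕ} (he : IsEar G S e L)
    (he0 : e 0 ∈ B) (hexit : ∃ b ∈ B, DiPathLE D (e L) b r) (hlen : L - 1 + r ≤ 2 * K)
    (hnear : ∀ k, 0 < k → k < L → ∀ n, ∀ b ∈ B, RelWalk G.Adj (e k) b n →
      L + r ≤ k + n ∨ k ≤ n) :
    PhaseInvariant G B K (S ∪ e '' Set.Ioo 0 L) (D ⊔ earArcs e L) := by
  have hDD : D ≤ D ⊔ earArcs e L := le_sup_left
  have harc : ∀ t < L, (D ⊔ earArcs e L) (e t) (e (t + 1)) :=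
    fun t ht => Or.inr ⟨t, ht, rfl, rfl⟩
  have hforward {k} (hk : k ≤ L) : ∃ b ∈ B, DiPathLE (D ⊔ earArcs e L) (e k) b (L - k + r) :=
    let ⟨b, hb, hp⟩ := hexit
    ⟨b, hb, (diPathLE_segment harc hk le_rfl).trans (hp.mono hDD le_rfl)⟩
  have hbackward {k} (hk : k ≤ L) : DiPathLE (D ⊔ earArcs e L) (e 0) (e k) k := by
    simpa using diPathLE_segment harc (Nat.zero_le k) hk
  refine ⟨he.isOrientedSubgraph_sup h.oriented, h.subset.trans Set.subset_union_left, ?_, ?_, ?_⟩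
  · rintro x (hx | ⟨k, ⟨hk0, hkL⟩, rfl⟩)
    · obtain ⟨b, hb, hp⟩ := h.to_base x hx
      exact ⟨b, hb, hp.mono hDD le_rfl⟩
    · obtain ⟨b, hb, hp⟩ := hforward hkL.le
      exact ⟨b, hb, hp.mono le_rfl (by omega)⟩
  · rintro x (hx | ⟨k, ⟨hk0, hkL⟩, rfl⟩)
    · obtain ⟨b, hb, hp⟩ := h.from_base x hx
      exact ⟨b, hb, hp.mono hDD le_rfl⟩
    · exact ⟨e 0, he0, (hbackward hkL.le).mono le_rfl (by omega)⟩
  · rintro x (hx | ⟨k, ⟨hk0, hkL⟩, rfl⟩) n b hb hw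
    · exact (h.near_base x hx n b hb hw).imp
        (fun ⟨b, hb, hp⟩ => ⟨b, hb, hp.mono hDD le_rfl⟩)
        (fun ⟨b, hb, hp⟩ => ⟨b, hb, hp.mono hDD le_rfl⟩)
    · rcases hnear k hk0 hkL n b hb hw with hn | hn
      · obtain ⟨b, hb, hp⟩ := hforward hkL.le
        exact Or.inl ⟨b, hb, hp.mono le_rfl (by omega)⟩
      · exact Or.inr ⟨e 0, he0, (hbackward hkL.le).mono le_rfl hn⟩

end PhaseInvariant

end Phase

section Detour

variable {V : Type*} {G : SimpleGraph V} {B : Set V} {u x : V} {g : ℕ → V} {ρ : ℕ}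

/-- A walk of length `s` from `g j` to `B` that avoids the edge `ux` extends the first `j`
steps of `g` to a detour of length `j + s`. Otherwise it reaches `u` or `x` after `t < s`
avoiding steps: reversing them and following `g` from `g j` gives a detour of length
`t + (ρ - j)`, and prefixing `g` gives one of length `j + t` ending at `x ∈ B`. -/
theorem IsShortestWalkTo.le_add_or_lt
    (hg : IsShortestWalkTo (G.deleteEdges {s(u, x)}).Adj B g ρ) (hg0 : g 0 = u) (hx : x ∈ B)
    {j : ℕ} (hj : j ≤ ρ) {b : V} (hb : b ∈ B) {s : ℕ} (hw : RelWalk G.Adj (g j) b s) :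
    ρ ≤ j + s ∨ j < s := by
  subst hg0
  have hprefix := hg.relWalk (Nat.zero_le j) hj
  rw [Nat.sub_zero] at hprefix
  rcases hw.exists_first_not (Q := (G.deleteEdges {s(g 0, x)}).Adj) with
    hw' | ⟨t, hts, c, c', hwt, hcc', hnot⟩
  · exact Or.inl (hg.le _ b hb (hprefix.append hw'))
  have hc : s(c, c') = s(g 0, x) := by
    simp only [deleteEdges_adj, Set.mem_singleton_iff, not_and, not_not] at hnot
    exact hnot hcc'
  rcases Sym2.eq_iff.1 hc with ⟨rfl, rfl⟩ | ⟨rfl, rfl⟩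
  · have hdetour := (hwt.flip.mono fun _ _ h => h.symm).append (hg.relWalk hj le_rfl)
    have := hg.le _ _ hg.mem hdetour
    omega
  · have := hg.le _ _ hx (hprefix.append hwt)
    omega

end Detour

section EarStep

variable {V : Type*} {G : SimpleGraph V} {B S : Set V} {K : ℕ} {D : V → V → Prop}

theorem exists_adj_notMem_of_not_kStepDom (hB : KStepDom G B (K + 1)) (hBS : B ⊆ S)
    (hS : ¬ KStepDom G S K) : ∃ u ∉ S, ∃ x ∈ B, G.Adj u x := by
  simp only [KStepDom, not_forall, not_exists, not_and, not_le] at hS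
  obtain ⟨v, hv⟩ := hS
  obtain ⟨x, hx, w, hw⟩ := hB v
  have hlen : w.length = K + 1 := by
    by_contra hne
    exact (hv x (hBS hx) w).not_ge (by omega)
  refine ⟨w.getVert K, fun hu => (hv _ hu (w.take K)).ne ?_, x, hx, ?_⟩
  · simp [Walk.take_length, hlen]
  · simpa [← hlen] using w.adj_getVert_succ (i := K) (by omega)

theorem IsShortestWalkTo.isEar {T : Set V} {u x : V} {g : ℕ → V} {ρ i : ℕ}
    (hg : IsShortestWalkTo (G.deleteEdges {s(u, x)}).Adj T g ρ) (hg0 : g 0 = u)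
    (hux : G.Adj u x) (hx : x ∈ S) (hi0 : 0 < i) (hiρ : i ≤ ρ) (hiS : g i ∈ S)
    (hfresh : ∀ j < i, g j ∉ S) :
    IsEar G S (fun | 0 => x | t + 1 => g t) (i + 1) where
  two_le := by omega
  adj
    | 0, _ => show G.Adj x (g 0) from hg0 ▸ hux.symm
    | t + 1, ht => show G.Adj (g t) (g (t + 1)) from deleteEdges_le _ (hg.step t (by omega))
  start_mem := hx
  end_mem := hiS
  notMem
    | k + 1, _, hk => hfresh k (by omega)
  injOn
    | k + 1, hk, k' + 1, hk', hkk' => by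
      simp only [Set.mem_Ioo] at hk hk'
      rw [hg.injOn (show k ≤ ρ by omega) (show k' ≤ ρ by omega) hkk']
  start_ne hx1 := by
    have hx1 : x = g 1 := hx1
    exact ((deleteEdges_adj ..).1 (hg.step 0 (by omega))).2 (by simp [hg0, ← hx1])

theorem PhaseInvariant.exists_ssuperset (h : PhaseInvariant G B (K + 1) S D)
    (hbr : ∀ e, ¬ G.IsBridge e) (hB : KStepDom G B (K + 1)) (hS : ¬ KStepDom G S K) :
    ∃ S' D', S ⊂ S' ∧ D ≤ D' ∧ PhaseInvariant G B (K + 1) S' D' := by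
  classical
  obtain ⟨u, hu, x, hx, hux⟩ := exists_adj_notMem_of_not_kStepDom hB h.subset hS
  obtain ⟨w⟩ : (G.deleteEdges {s(u, x)}).Reachable u x := not_not.1 (hbr s(u, x))
  obtain ⟨g, ρ, hg0, hg⟩ := exists_isShortestWalkTo w.relWalk hx
  have hρ : ρ ≤ 2 * (K + 1) := by
    by_contra! hρ
    obtain ⟨b, hb, w', hw'⟩ := hB (g (K + 1))
    have := hg.le_add_or_lt hg0 hx (by omega) hb w'.relWalk
    omega
  have hex : ∃ i, g i ∈ S ∧ i ≤ ρ := ⟨ρ, h.subset hg.mem, le_rfl⟩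
  obtain ⟨i, ⟨hiS, hiρ⟩, hfresh⟩ : ∃ i, (g i ∈ S ∧ i ≤ ρ) ∧ ∀ j < i, ¬ (g j ∈ S ∧ j ≤ ρ) :=
    ⟨_, Nat.find_spec hex, fun _ => Nat.find_min hex⟩
  have hi0 : 0 < i := Nat.pos_of_ne_zero fun hi => hu (hg0 ▸ hi ▸ hiS)
  let e : ℕ → V := fun | 0 => x | t + 1 => g t
  have hear : IsEar G S e (i + 1) :=
    hg.isEar hg0 hux (h.subset hx) hi0 hiρ hiS fun j hj hjS => hfresh j hj ⟨hjS, by omega⟩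
  have hnear : ∀ k, 0 < k → k < i + 1 → ∀ n, ∀ b ∈ B, RelWalk G.Adj (e k) b n →
      i + 1 + (ρ - i) ≤ k + n ∨ k ≤ n := by
    rintro (_ | k) hk0 hk n b hb hw
    · omega
    · have := hg.le_add_or_lt hg0 hx (j := k) (by omega) hb hw
      omega
  have hexit := h.near_base (g i) hiS (ρ - i) (g ρ) hg.mem
    ((hg.relWalk hiρ le_rfl).mono fun _ _ => (deleteEdges_le _ ·))
  rcases hexit with hexit | ⟨b, hb, hp⟩
  · exact ⟨_, _, hear.ssubset, le_sup_left, h.sup_earArcs hear hx hexit (by omega) hnear⟩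
  · -- orienting the ear against `e` is the previous case for the reversed orientation
    have := h.flip.sup_earArcs hear hx ⟨b, hb, diPathLE_flip_iff.2 hp⟩ (by omega) hnear
    exact ⟨_, _, hear.ssubset, fun a c hac => Or.inl hac, this.flip⟩

end EarStep

section Construction

variable {V : Type*} [Finite V] {G : SimpleGraph V}

theorem exists_phaseInvariant_kStepDom (hbr : ∀ e, ¬ G.IsBridge e) {B : Set V} {K : ℕ}
    {D : V → V → Prop} (hB : KStepDom G B (K + 1)) (hD : IsOrientedSubgraph G B D) :
    ∃ S D', D ≤ D' ∧ PhaseInvariant G B (K + 1) S D' ∧ KStepDom G S K := by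
  suffices ∀ S D', D ≤ D' → PhaseInvariant G B (K + 1) S D' →
      ∃ S' D'', D ≤ D'' ∧ PhaseInvariant G B (K + 1) S' D'' ∧ KStepDom G S' K from
    this B D le_rfl (.base hD)
  intro S
  induction S using WellFoundedGT.induction with
  | _ S ih =>
    intro D' hDD' hI
    by_cases hS : KStepDom G S K
    · exact ⟨S, D', hDD', hI, hS⟩
    obtain ⟨S', D'', hSS', hD'D'', hI'⟩ := hI.exists_ssuperset hbr hB hS
    exact ih S' hSS' D'' (hDD'.trans hD'D'') hI'

/-- The phases for `K, K - 1, …, 1` cost `2K + 2(K - 1) + ⋯ + 2 = K (K + 1)`. -/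
theorem exists_isOrientation_diPathLE (hbr : ∀ e, ¬ G.IsBridge e) (v₀ : V) :
    ∀ (K N : ℕ) (S : Set V) (D : V → V → Prop), IsOrientedSubgraph G S D → KStepDom G S K →
      (∀ x ∈ S, DiPathLE D x v₀ N ∧ DiPathLE D v₀ x N) →
      ∃ O, IsOrientation G O ∧
        ∀ x, DiPathLE O x v₀ (N + K * (K + 1)) ∧ DiPathLE O v₀ x (N + K * (K + 1))
  | 0, N, S, D, hD, hS, hreach => by
    obtain ⟨O, hO, hDO⟩ := hD.exists_isOrientation_le
    refine ⟨O, hO, fun x => ?_⟩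
    obtain ⟨b, hb, w, hw⟩ := hS x
    obtain rfl := w.eq_of_length_eq_zero (by omega)
    exact ⟨(hreach x hb).1.mono hDO (by simp), (hreach x hb).2.mono hDO (by simp)⟩
  | K + 1, N, S, D, hD, hS, hreach => by
    obtain ⟨S', D', hDD', hI, hS'⟩ := exists_phaseInvariant_kStepDom hbr hS hD
    have hreach' (x) (hx : x ∈ S') :
        DiPathLE D' x v₀ (2 * (K + 1) + N) ∧ DiPathLE D' v₀ x (N + 2 * (K + 1)) := by
      obtain ⟨b, hb, hxb⟩ := hI.to_base x hx
      obtain ⟨b', hb', hbx⟩ := hI.from_base x hx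
      exact ⟨hxb.trans ((hreach b hb).1.mono hDD' le_rfl),
        ((hreach b' hb').2.mono hDD' le_rfl).trans hbx⟩
    obtain ⟨O, hO, hreachO⟩ := exists_isOrientation_diPathLE hbr v₀ K (N + 2 * (K + 1)) S' D'
      hI.oriented hS' fun x hx => ⟨(hreach' x hx).1.mono le_rfl (by omega), (hreach' x hx).2⟩
    have hcost : N + 2 * (K + 1) + K * (K + 1) = N + (K + 1) * (K + 1 + 1) := by ring
    exact ⟨O, hO, fun x => hcost ▸ hreachO x⟩

end Construction

theorem chvatal_thomassen_diameter_upper_general {V : Type*} [Fintype V]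
    (d : ℕ) (G : SimpleGraph V)
    (h2ec : TwoEdgeConnected G) (hdiam : HasDiam G d) :
    ∃ O : V → V → Prop, IsOrientation G O ∧
      ∀ u v : V, DiPathLE O u v (2 * d ^ 2 + 2 * d) := by
  obtain ⟨hconn, hdist, -⟩ := hdiam
  obtain ⟨v₀⟩ := hconn.nonempty
  have hdom : KStepDom G {v₀} d := fun v =>
    let ⟨w, hw⟩ := hconn.exists_walk_length_eq_dist v v₀
    ⟨v₀, rfl, w, hw ▸ hdist v v₀⟩
  have hD : IsOrientedSubgraph G {v₀} ⊥ := ⟨fun _ _ => False.elim, fun _ _ h => h.1⟩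
  obtain ⟨O, hO, hreach⟩ := exists_isOrientation_diPathLE h2ec.2 v₀ d 0 {v₀} ⊥ hD hdom
    (by rintro x rfl; exact ⟨.refl _ _ _, .refl _ _ _⟩)
  have hcost : 0 + d * (d + 1) + (0 + d * (d + 1)) = 2 * d ^ 2 + 2 * d := by ring
  exact ⟨O, hO, fun u v => hcost ▸ (hreach u).1.trans (hreach v).2⟩

/-- **Chvátal–Thomassen, upper bound.** Every 2-edge connected graph of
diameter `d` admits a strong orientation of diameter at most `2d² + 2d`. -/
theorem chvatal_thomassen_diameter_upper {V : Type*} [Fintype V]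
    (d : ℕ) (hd : 0 < d) (G : SimpleGraph V)
    (h2ec : TwoEdgeConnected G) (hdiam : HasDiam G d) :
    ∃ O : V → V → Prop, IsOrientation G O ∧
      ∀ u v : V, DiPathLE O u v (2 * d ^ 2 + 2 * d) :=
  chvatal_thomassen_diameter_upper_general d G h2ec hdiam
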